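/- Fix S > 0 and ξ ∈ ℝ, and define f(x) = N(ξ + (1/S)·ln x) − x^{−2ξ/S}·N(ξ − (1/S)·ln x). If −S/2 < ξ < 0, then lim_{x→0+} f'(x) = −∞; if ξ = −S/2, then lim_{x→0+} f'(x) = −1; and if ξ < −S/2, then lim_{x→0+} f'(x) = 0. -/

import Mathlib

/-!
The Gaussian tilt `φ(ξ + a) = e^{-2ξa} φ(ξ - a)`, applied with `a = (log x)/S`, makes the two
density terms of `f'` combine, leaving `f'(x) = (2/S) x^{-2ξ/S-1} (φ(u) + ξ N(u))` with
`u = ξ - (log x)/S`. As `x → 0+`, `u → ∞`, so the bracket tends to `ξ < 0`, while the power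
tends to `∞`, `1` or `0` according to the sign of its exponent `-2ξ/S - 1`.
-/

open Real Set Filter Topology

noncomputable def stdNormalCDF (x : ℝ) : ℝ :=
  (Real.sqrt (2 * Real.pi))⁻¹ * ∫ t in Set.Iic x, Real.exp (-t ^ 2 / 2)

open MeasureTheory

theorem hasDerivAt_setIntegral_Iic {f : ℝ → ℝ} (hfi : Integrable f) (hf : Continuous f)
    (x : ℝ) :
    HasDerivAt (fun y => ∫ t in Iic y, f t) (f x) x := by
  have hFTC : HasDerivAt (fun y => ∫ t in (0 : ℝ)..y, f t) (f x) x :=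
    intervalIntegral.integral_hasDerivAt_right hfi.intervalIntegrable
      hf.aestronglyMeasurable.stronglyMeasurableAtFilter hf.continuousAt
  refine (hFTC.const_add (∫ t in Iic 0, f t)).congr_of_eventuallyEq (.of_forall fun y => ?_)
  linarith [intervalIntegral.integral_Iic_sub_Iic hfi.integrableOn hfi.integrableOn
    (a := 0) (b := y)]

theorem integrable_exp_neg_sq_div_two : Integrable fun t : ℝ => exp (-t ^ 2 / 2) := by
  convert integrable_exp_neg_mul_sq (b := 1 / 2) one_half_pos using 3
  ring

theorem integral_exp_neg_sq_div_two : ∫ t : ℝ, exp (-t ^ 2 / 2) = √(2 * π) := by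
  simpa [neg_div, div_eq_inv_mul, neg_mul] using integral_gaussian (1 / 2)

noncomputable def stdNormalPDF (x : ℝ) : ℝ :=
  (√(2 * π))⁻¹ * exp (-x ^ 2 / 2)

theorem hasDerivAt_stdNormalCDF (x : ℝ) : HasDerivAt stdNormalCDF (stdNormalPDF x) x :=
  (hasDerivAt_setIntegral_Iic integrable_exp_neg_sq_div_two (by fun_prop) x).const_mul _

theorem tendsto_stdNormalCDF_atTop : Tendsto stdNormalCDF atTop (𝓝 1) := by
  have h := ((aecover_Iic tendsto_id).integral_tendsto_of_countably_generated
    integrable_exp_neg_sq_div_two).const_mul (√(2 * π))⁻¹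
  rwa [integral_exp_neg_sq_div_two, inv_mul_cancel₀ (by positivity)] at h

theorem tendsto_stdNormalPDF_atTop : Tendsto stdNormalPDF atTop (𝓝 0) := by
  have h : Tendsto (fun x : ℝ => -x ^ 2 / 2) atTop atBot :=
    (tendsto_neg_atTop_atBot.comp (tendsto_pow_atTop two_ne_zero)).atBot_div_const two_pos
  have := (tendsto_exp_atBot.comp h).const_mul (√(2 * π))⁻¹
  rwa [mul_zero] at this

theorem stdNormalPDF_add (a b : ℝ) :
    stdNormalPDF (a + b) = exp (-2 * a * b) * stdNormalPDF (a - b) := by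
  rw [stdNormalPDF, stdNormalPDF, mul_left_comm, ← exp_add]
  ring_nf

theorem hasDerivAt_stdNormalCDF_sub_rpow_mul_stdNormalCDF (S ξ : ℝ) {x : ℝ} (hx : 0 < x) :
    HasDerivAt (fun y => stdNormalCDF (ξ + 1 / S * log y) -
        y ^ (-2 * ξ / S) * stdNormalCDF (ξ - 1 / S * log y))
      (2 / S * x ^ (-2 * ξ / S - 1) *
        (stdNormalPDF (ξ - 1 / S * log x) + ξ * stdNormalCDF (ξ - 1 / S * log x))) x := by
  have hlog := hasDerivAt_log hx.ne'
  have hplus := (hasDerivAt_stdNormalCDF _).comp x ((hlog.const_mul (1 / S)).const_add ξ)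
  have hminus := (hasDerivAt_stdNormalCDF _).comp x ((hlog.const_mul (1 / S)).const_sub ξ)
  have hpow := hasDerivAt_rpow_const (p := -2 * ξ / S) (Or.inl hx.ne')
  refine (hplus.sub (hpow.mul hminus)).congr_deriv ?_
  have htilt : stdNormalPDF (ξ + 1 / S * log x) =
      x ^ (-2 * ξ / S) * stdNormalPDF (ξ - 1 / S * log x) := by
    rw [stdNormalPDF_add, rpow_def_of_pos hx]
    ring_nf
  rw [htilt, rpow_sub hx, rpow_one, Function.comp_apply]
  ring

theorem tendsto_stdNormalPDF_add_mul_stdNormalCDF_atTop (ξ : ℝ) :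
    Tendsto (fun u => stdNormalPDF u + ξ * stdNormalCDF u) atTop (𝓝 ξ) := by
  simpa using tendsto_stdNormalPDF_atTop.add (tendsto_stdNormalCDF_atTop.const_mul ξ)

theorem tendsto_const_sub_mul_log_nhdsGT_zero (ξ : ℝ) {k : ℝ} (hk : 0 < k) :
    Tendsto (fun x => ξ - k * log x) (𝓝[>] 0) atTop := by
  simpa only [sub_eq_add_neg, Function.comp_def] using tendsto_atTop_add_const_left _ ξ
    (tendsto_neg_atBot_atTop.comp (tendsto_log_nhdsGT_zero.const_mul_atBot hk))

theorem tendsto_rpow_nhdsGT_zero {p : ℝ} (hp : 0 < p) :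
    Tendsto (fun x : ℝ => x ^ p) (𝓝[>] 0) (𝓝 0) := by
  simpa [zero_rpow hp.ne'] using
    (continuousAt_rpow_const 0 p (Or.inr hp.le)).tendsto.mono_left nhdsWithin_le_nhds

theorem f_deriv_limits_at_zero (S ξ : ℝ) (hS : 0 < S) (hξ : ξ < 0)
    (f : ℝ → ℝ)
    (hf : ∀ x > 0, f x = stdNormalCDF (ξ + (1 / S) * Real.log x) -
        x ^ (-2 * ξ / S) * stdNormalCDF (ξ - (1 / S) * Real.log x)) :
    (-S / 2 < ξ → Filter.Tendsto (deriv f) (nhdsWithin 0 (Set.Ioi 0)) Filter.atBot) ∧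
    (ξ = -S / 2 → Filter.Tendsto (deriv f) (nhdsWithin 0 (Set.Ioi 0)) (nhds (-1))) ∧
    (ξ < -S / 2 → Filter.Tendsto (deriv f) (nhdsWithin 0 (Set.Ioi 0)) (nhds 0)) := by
  set g : ℝ → ℝ := fun x =>
    stdNormalPDF (ξ - 1 / S * log x) + ξ * stdNormalCDF (ξ - 1 / S * log x)
  have hderiv : deriv f =ᶠ[𝓝[>] 0] fun x => 2 / S * x ^ (-2 * ξ / S - 1) * g x := by
    filter_upwards [self_mem_nhdsWithin] with x hx
    exact ((hasDerivAt_stdNormalCDF_sub_rpow_mul_stdNormalCDF S ξ hx).congr_of_eventuallyEq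
      (eventuallyEq_of_mem (Ioi_mem_nhds hx) hf)).deriv
  have hg : Tendsto g (𝓝[>] 0) (𝓝 ξ) :=
    (tendsto_stdNormalPDF_add_mul_stdNormalCDF_atTop ξ).comp
      (tendsto_const_sub_mul_log_nhdsGT_zero ξ (one_div_pos.2 hS))
  refine ⟨fun hlt => ?_, fun heq => ?_, fun hgt => ?_⟩
  · have hp : -2 * ξ / S - 1 < 0 := by rw [sub_neg, div_lt_one hS]; linarith
    exact (((tendsto_rpow_neg_nhdsGT_zero hp).const_mul_atTop (by positivity)).atTop_mul_neg
      hξ hg).congr' hderiv.symm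
  · have hp : -2 * ξ / S - 1 = 0 := by rw [heq]; field_simp; ring
    have hlim : 2 / S * ξ = -1 := by rw [heq]; field_simp
    simp only [hp, rpow_zero, mul_one] at hderiv
    exact (hlim ▸ hg.const_mul (2 / S)).congr' hderiv.symm
  · have hp : 0 < -2 * ξ / S - 1 := by rw [sub_pos, lt_div_iff₀ hS]; linarith
    simpa using ((tendsto_rpow_nhdsGT_zero hp).const_mul (2 / S)).mul hg |>.congr' hderiv.symm
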